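/- arXiv:2502.03503 — 3 statements merged into one kernel-verified Lean document; each statement's English description precedes it below -/
import Mathlib

section
/- Let p ≥ 1, let x₁, …, x_p ∈ ℝ be fixed context points, and let α < 0. Then the single-head softmax attention output satisfies A_α(x) → max_{1 ≤ j ≤ p} x_j as x → −∞. -/
open Filter Real

/-- Denominator of the softmax attention: `D_α(x) = exp(α x²) + ∑ₖ exp(α x xₖ)`. -/
noncomputable def attnDenom (p : ℕ) (xs : Fin p → ℝ) (α : ℝ) (x : ℝ) : ℝ :=
  Real.exp (α * x ^ 2) + ∑ k, Real.exp (α * x * xs k)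

/-- Single-head softmax attention output
`A_α(x) = (∑ⱼ xⱼ exp(α x xⱼ) + x exp(α x²)) / D_α(x)`. -/
noncomputable def attnOut (p : ℕ) (xs : Fin p → ℝ) (α : ℝ) (x : ℝ) : ℝ :=
  (∑ j, xs j * Real.exp (α * x * xs j) + x * Real.exp (α * x ^ 2)) / attnDenom p xs α x

/-!
Divide numerator and denominator of `A_α(x)` by `exp(α x M)`, where `M = maxⱼ xⱼ`. Since `α x > 0`
for `x < 0`, each rescaled weight `exp(α x (xⱼ - M))` tends to `1` if `xⱼ = M` and to `0`
otherwise, while the query's own weight `exp(α x (x - M))` decays like a Gaussian and kills even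
the growing factor `x`. So the output tends to the average of the maximal context points, i.e. `M`.
-/

open Topology

lemma tendsto_mul_exp_atBot : Tendsto (fun x : ℝ => x * exp x) atBot (𝓝 0) := by
  have h := (tendsto_pow_mul_exp_neg_atTop_nhds_zero 1).neg.comp tendsto_neg_atBot_atTop
  simpa [Function.comp_def] using h

section

variable {α : ℝ}

lemma tendsto_mul_mul_sub_atBot (hα : α < 0) (M : ℝ) :
    Tendsto (fun x : ℝ => α * x * (x - M)) atBot atBot := by
  have h := tendsto_id.atBot_mul_atTop₀
    ((tendsto_atBot_add_const_right _ (-M) tendsto_id).const_mul_atBot_of_neg hα)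
  refine h.congr fun x => ?_
  simp only [id]
  ring

lemma tendsto_exp_mul_mul_sub_atBot (hα : α < 0) (M : ℝ) :
    Tendsto (fun x : ℝ => exp (α * x * (x - M))) atBot (𝓝 0) :=
  tendsto_exp_atBot.comp (tendsto_mul_mul_sub_atBot hα M)

lemma tendsto_mul_exp_mul_mul_sub_atBot (hα : α < 0) (M : ℝ) :
    Tendsto (fun x : ℝ => x * exp (α * x * (x - M))) atBot (𝓝 0) := by
  -- `α x (x - M) = x + α x (x - (M + α⁻¹))`
  have h := tendsto_mul_exp_atBot.mul (tendsto_exp_mul_mul_sub_atBot hα (M + α⁻¹))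
  rw [zero_mul] at h
  refine h.congr fun x => ?_
  rw [mul_assoc, ← exp_add]
  congr 2
  linear_combination (-x) * mul_inv_cancel₀ hα.ne

lemma tendsto_exp_mul_mul_sub_max_atBot (hα : α < 0) {t M : ℝ} (ht : t ≤ M) :
    Tendsto (fun x : ℝ => exp (α * x * (t - M))) atBot (𝓝 (if t = M then 1 else 0)) := by
  obtain rfl | hlt := ht.eq_or_lt
  · simp
  have hc : 0 < α * (t - M) := mul_pos_of_neg_of_neg hα (sub_neg.2 hlt)
  rw [if_neg hlt.ne]
  refine (tendsto_exp_atBot.comp (tendsto_id.const_mul_atBot hc)).congr fun x => ?_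
  simp only [Function.comp_apply, id]
  ring_nf

end

lemma attnOut_eq_div_shift (p : ℕ) (xs : Fin p → ℝ) (α M x : ℝ) :
    attnOut p xs α x =
      (∑ j, xs j * exp (α * x * (xs j - M)) + x * exp (α * x * (x - M))) /
        (exp (α * x * (x - M)) + ∑ j, exp (α * x * (xs j - M))) := by
  have hshift : ∀ t, exp (α * x * t) = exp (α * x * (t - M)) * exp (α * x * M) := fun t => by
    rw [← exp_add]
    ring_nf
  rw [attnOut, attnDenom, sq, ← mul_assoc, hshift x]
  simp only [hshift (xs _), ← mul_assoc, ← Finset.sum_mul, ← add_mul]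
  exact mul_div_mul_right _ _ (exp_pos _).ne'

theorem stmt_5 (p : ℕ) (hp : 1 ≤ p) (xs : Fin p → ℝ) (α : ℝ) (hα : α < 0) :
    Filter.Tendsto (fun x : ℝ => attnOut p xs α x) Filter.atBot
      (nhds (Finset.univ.sup' ⟨⟨0, hp⟩, Finset.mem_univ _⟩ xs)) := by
  set M := Finset.univ.sup' ⟨⟨0, hp⟩, Finset.mem_univ _⟩ xs
  set w : Fin p → ℝ := fun j => if xs j = M then 1 else 0
  have hw_pos : 0 < ∑ j, w j := by
    obtain ⟨j, -, hj⟩ := Finset.exists_mem_eq_sup' ⟨⟨0, hp⟩, Finset.mem_univ _⟩ xs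
    refine Finset.sum_pos' (fun i _ => by positivity) ⟨j, Finset.mem_univ j, ?_⟩
    simp [w, ← hj, M]
  have hweight (j : Fin p) : Tendsto (fun x => exp (α * x * (xs j - M))) atBot (𝓝 (w j)) :=
    tendsto_exp_mul_mul_sub_max_atBot hα (Finset.le_sup' xs (Finset.mem_univ j))
  have hnum := (tendsto_finsetSum Finset.univ fun j _ => (hweight j).const_mul (xs j)).add
    (tendsto_mul_exp_mul_mul_sub_atBot hα M)
  have hden := (tendsto_exp_mul_mul_sub_atBot hα M).add (tendsto_finsetSum Finset.univ
    fun j _ => hweight j)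
  have hsum : ∑ j, xs j * w j = M * ∑ j, w j := by
    rw [Finset.mul_sum]
    refine Finset.sum_congr rfl fun j _ => ?_
    by_cases h : xs j = M <;> simp [w, h]
  have h := hnum.div hden (by rw [zero_add]; exact hw_pos.ne')
  rw [add_zero, zero_add, hsum, mul_div_cancel_right₀ _ hw_pos.ne'] at h
  exact h.congr fun x => (attnOut_eq_div_shift p xs α M x).symm
end

section
/- (Lemma 1, at −∞.) The multi-head attention output tends to a single linear function as x → −∞: Attn(x) − (x·A + B′) → 0 in ℝ^d as x → −∞, where A = ∑_{h : α_h > 0} ζ_h + (1/(p+1))·∑_{h : α_h = 0} ζ_h and B′ = (max_{1 ≤ j ≤ p} x_j)·∑_{h : α_h < 0} ζ_h + ((∑_{j=1}^p x_j)/(p+1))·∑_{h : α_h = 0} ζ_h. -/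
open Filter Real
open scoped Classical

/-- Multi-head attention output `Attn(x) = ∑ₕ A_{αₕ}(x) • ζₕ` with values in ℝ^d. -/
noncomputable def multiAttn (p : ℕ) (xs : Fin p → ℝ) (H d : ℕ) (αs : Fin H → ℝ)
    (ζ : Fin H → EuclideanSpace ℝ (Fin d)) (x : ℝ) : EuclideanSpace ℝ (Fin d) :=
  ∑ h, attnOut p xs (αs h) x • ζ h

/-!
Each head is a softmax average of the values `x, x₁, …, x_p` with scores `α x · value`.
As `x → -∞` the weights concentrate on the value of largest score: the query `x` itself
when `α > 0`, the largest context point when `α < 0`; for `α = 0` the head is the plain mean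
`(∑ xⱼ + x)/(p + 1)`. Quantitatively, if `exp s ≤ D_α` for the winning score `s`, a value `v`
contributes an error of at most `|v - c| exp(score - s)`, and each of these bounds decays
at least like `|a - x| exp(x - a)`.
-/

lemma abs_sub_mul_exp_mul_sub_le (a β x : ℝ) (hβx : β * x ≤ -1) (hxa : x ≤ a) :
    |a - x| * exp (β * x * (a - x)) ≤ (a - x) * exp (x - a) := by
  rw [abs_of_nonneg (sub_nonneg.mpr hxa)]
  gcongr
  nlinarith [mul_le_mul_of_nonneg_right hβx (sub_nonneg.mpr hxa)]

lemma tendsto_abs_sub_mul_exp_mul_sub_atBot (a β : ℝ) (hβ : 0 < β) :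
    Tendsto (fun x => |a - x| * exp (β * x * (a - x))) atBot (nhds 0) := by
  have hdecay : Tendsto (fun x : ℝ => (a - x) * exp (x - a)) atBot (nhds 0) := by
    have ha : Tendsto (fun x : ℝ => a - x) atBot atTop := by
      simpa [sub_eq_add_neg] using tendsto_atTop_add_const_left atBot a tendsto_neg_atBot_atTop
    simpa [Function.comp_def, neg_sub] using (tendsto_pow_mul_exp_neg_atTop_nhds_zero 1).comp ha
  refine squeeze_zero' (Eventually.of_forall fun x => by positivity) ?_ hdecay
  filter_upwards [eventually_le_atBot (min a (-β⁻¹))] with x hx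
  refine abs_sub_mul_exp_mul_sub_le a β x ?_ (hx.trans (min_le_left _ _))
  have := mul_le_mul_of_nonneg_left (hx.trans (min_le_right _ _)) hβ.le
  rwa [mul_neg, mul_inv_cancel₀ hβ.ne'] at this

lemma abs_mul_exp_div_le_of_exp_le (v t s D : ℝ) (hs : exp s ≤ D) :
    |v * exp t / D| ≤ |v| * exp (t - s) := by
  rw [abs_div, abs_mul, abs_of_pos (exp_pos t), abs_of_pos ((exp_pos s).trans_le hs), exp_sub,
    mul_div_assoc]
  gcongr

section Head

variable (p : ℕ) (xs : Fin p → ℝ) (α : ℝ)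

lemma attnDenom_pos (x : ℝ) : 0 < attnDenom p xs α x :=
  add_pos_of_pos_of_nonneg (exp_pos _) (Finset.sum_nonneg fun _ _ => (exp_pos _).le)

lemma attnOut_sub (x c : ℝ) :
    attnOut p xs α x - c = ∑ j, (xs j - c) * exp (α * x * xs j) / attnDenom p xs α x
      + (x - c) * exp (α * x ^ 2) / attnDenom p xs α x := by
  rw [attnOut, div_sub' (attnDenom_pos p xs α x).ne', ← Finset.sum_div, ← add_div]
  congr 1
  simp only [attnDenom, sub_mul, Finset.sum_sub_distrib, ← Finset.mul_sum]
  ring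

lemma tendsto_attnOut_sub_of_exp_le {l : Filter ℝ} (c s : ℝ → ℝ)
    (hs : ∀ x, exp (s x) ≤ attnDenom p xs α x)
    (hctx : ∀ j, Tendsto (fun x => |xs j - c x| * exp (α * x * xs j - s x)) l (nhds 0))
    (hquery : Tendsto (fun x => |x - c x| * exp (α * x ^ 2 - s x)) l (nhds 0)) :
    Tendsto (fun x => attnOut p xs α x - c x) l (nhds 0) := by
  simp_rw [attnOut_sub]
  rw [show (0 : ℝ) = ∑ _j : Fin p, (0 : ℝ) + 0 by simp]
  refine (tendsto_finsetSum _ fun j _ => ?_).add ?_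
  · exact squeeze_zero_norm (fun x => abs_mul_exp_div_le_of_exp_le _ _ _ _ (hs x)) (hctx j)
  · exact squeeze_zero_norm (fun x => abs_mul_exp_div_le_of_exp_le _ _ _ _ (hs x)) hquery

lemma tendsto_attnOut_sub_self_of_pos (hα : 0 < α) :
    Tendsto (fun x => attnOut p xs α x - x) atBot (nhds 0) := by
  refine tendsto_attnOut_sub_of_exp_le p xs α id (fun x => α * x ^ 2)
    (fun x => le_add_of_nonneg_right (Finset.sum_nonneg fun _ _ => (exp_pos _).le))
    (fun j => ?_) (by simp)
  convert tendsto_abs_sub_mul_exp_mul_sub_atBot (xs j) α hα using 4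
  · rfl
  · ring

lemma attnOut_zero (x : ℝ) : attnOut p xs 0 x = (∑ j, xs j + x) / (p + 1) := by
  simp [attnOut, attnDenom, add_comm (1 : ℝ)]

lemma tendsto_attnOut_sub_of_neg {M : ℝ} (hM : IsGreatest (Set.range xs) M) (hα : α < 0) :
    Tendsto (fun x => attnOut p xs α x - M) atBot (nhds 0) := by
  obtain ⟨⟨jmax, hjmax⟩, hle⟩ := hM
  have hs : ∀ x, exp (α * x * M) ≤ attnDenom p xs α x := fun x =>
    calc exp (α * x * M) ≤ ∑ k, exp (α * x * xs k) := by
          rw [← hjmax]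
          exact Finset.single_le_sum (f := fun k => exp (α * x * xs k))
            (fun k _ => (exp_pos _).le) (Finset.mem_univ jmax)
      _ ≤ attnDenom p xs α x := le_add_of_nonneg_left (exp_pos _).le
  refine tendsto_attnOut_sub_of_exp_le p xs α (fun _ => M) (fun x => α * x * M) hs
    (fun j => ?_) ?_
  · rcases (hle ⟨j, rfl⟩).eq_or_lt with hj | hj
    · simp [hj]
    · have hrate : 0 < α * (xs j - M) := mul_pos_of_neg_of_neg hα (by linarith)
      convert ((tendsto_exp_atBot.comp (tendsto_id.const_mul_atBot hrate)).const_mul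
        |xs j - M|) using 2 with x
      · simp only [Function.comp, id]
        ring_nf
      · simp
  · convert tendsto_abs_sub_mul_exp_mul_sub_atBot M (-α) (neg_pos.mpr hα) using 3 with x
    · rw [abs_sub_comm]
    · congr 1
      ring

noncomputable def headAsymptote (M x : ℝ) : ℝ :=
  if 0 < α then x else if α = 0 then (∑ j, xs j + x) / (p + 1) else M

lemma tendsto_attnOut_sub_headAsymptote {M : ℝ} (hM : IsGreatest (Set.range xs) M) :
    Tendsto (fun x => attnOut p xs α x - headAsymptote p xs α M x) atBot (nhds 0) := by
  rcases lt_trichotomy α 0 with hα | rfl | hα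
  · simpa [headAsymptote, hα.not_gt, hα.ne] using tendsto_attnOut_sub_of_neg p xs α hM hα
  · simp [headAsymptote, attnOut_zero]
  · simpa [headAsymptote, hα] using tendsto_attnOut_sub_self_of_pos p xs α hα

end Head

lemma sum_headAsymptote_smul {ι E : Type*} [Fintype ι] [AddCommGroup E] [Module ℝ E]
    (p : ℕ) (xs : Fin p → ℝ) (αs : ι → ℝ) (ζ : ι → E) (M x : ℝ) :
    ∑ h, headAsymptote p xs (αs h) M x • ζ h =
      x • ((∑ h ∈ Finset.univ.filter fun h => 0 < αs h, ζ h) +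
        ((p : ℝ) + 1)⁻¹ • ∑ h ∈ Finset.univ.filter fun h => αs h = 0, ζ h) +
      (M • (∑ h ∈ Finset.univ.filter fun h => αs h < 0, ζ h) +
        ((∑ j, xs j) / ((p : ℝ) + 1)) • ∑ h ∈ Finset.univ.filter fun h => αs h = 0, ζ h) := by
  simp only [Finset.sum_filter, Finset.smul_sum, smul_add, smul_smul, ← Finset.sum_add_distrib]
  refine Finset.sum_congr rfl fun h _ => ?_
  rcases lt_trichotomy (αs h) 0 with hα | hα | hα
  · simp [headAsymptote, hα, hα.ne, hα.not_gt]
  · simp only [headAsymptote, hα, lt_irrefl, if_false, if_true, smul_zero, zero_add]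
    rw [add_div, add_smul, div_eq_mul_inv, div_eq_mul_inv, mul_comm x]
    abel
  · simp [headAsymptote, hα, hα.ne', hα.not_gt]

theorem stmt_7_general (p : ℕ) (hp : 1 ≤ p) (xs : Fin p → ℝ) (H d : ℕ)
    (αs : Fin H → ℝ) (ζ : Fin H → EuclideanSpace ℝ (Fin d))
    (A B' : EuclideanSpace ℝ (Fin d))
    (hA : A = (∑ h ∈ Finset.univ.filter fun h => 0 < αs h, ζ h) +
      ((p : ℝ) + 1)⁻¹ • ∑ h ∈ Finset.univ.filter fun h => αs h = 0, ζ h)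
    (hB' : B' = (Finset.univ.sup' ⟨⟨0, hp⟩, Finset.mem_univ _⟩ xs) •
        (∑ h ∈ Finset.univ.filter fun h => αs h < 0, ζ h) +
      ((∑ j, xs j) / ((p : ℝ) + 1)) • ∑ h ∈ Finset.univ.filter fun h => αs h = 0, ζ h) :
    Filter.Tendsto (fun x : ℝ => multiAttn p xs H d αs ζ x - (x • A + B'))
      Filter.atBot (nhds 0) := by
  set M := Finset.univ.sup' ⟨⟨0, hp⟩, Finset.mem_univ _⟩ xs
  have hM : IsGreatest (Set.range xs) M := by
    obtain ⟨j, -, hj⟩ := Finset.exists_mem_eq_sup' ⟨⟨0, hp⟩, Finset.mem_univ _⟩ xs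
    exact ⟨⟨j, hj.symm⟩, Set.forall_mem_range.mpr fun j => Finset.le_sup' xs (Finset.mem_univ j)⟩
  subst hA hB'
  simp_rw [← sum_headAsymptote_smul p xs αs ζ M, multiAttn, ← Finset.sum_sub_distrib, ← sub_smul]
  simpa using tendsto_finsetSum Finset.univ fun h _ =>
    (tendsto_attnOut_sub_headAsymptote p xs (αs h) hM).smul_const (ζ h)

theorem stmt_7 (p : ℕ) (hp : 1 ≤ p) (xs : Fin p → ℝ) (H d : ℕ) (hH : 1 ≤ H) (hd : 1 ≤ d)
    (αs : Fin H → ℝ) (ζ : Fin H → EuclideanSpace ℝ (Fin d))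
    (A B' : EuclideanSpace ℝ (Fin d))
    (hA : A = (∑ h ∈ Finset.univ.filter fun h => 0 < αs h, ζ h) +
      ((p : ℝ) + 1)⁻¹ • ∑ h ∈ Finset.univ.filter fun h => αs h = 0, ζ h)
    (hB' : B' = (Finset.univ.sup' ⟨⟨0, hp⟩, Finset.mem_univ _⟩ xs) •
        (∑ h ∈ Finset.univ.filter fun h => αs h < 0, ζ h) +
      ((∑ j, xs j) / ((p : ℝ) + 1)) • ∑ h ∈ Finset.univ.filter fun h => αs h = 0, ζ h) :
    Filter.Tendsto (fun x : ℝ => multiAttn p xs H d αs ζ x - (x • A + B'))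
      Filter.atBot (nhds 0) :=
  stmt_7_general p hp xs H d αs ζ A B' hA hB'
end

section
/- (Boundary values preclude extrapolation of linear targets with Layer Normalization.) Let d ≥ 1, let u, w ∈ ℝ^d with Var(u) > 0, and let v : ℝ → ℝ^d satisfy v(x) − (x·u + w) → 0 as x → +∞. Then for any gain ρ ∈ ℝ^d, bias ε ∈ ℝ^d, decoder vector W_dec ∈ ℝ^d, and any linear target f(x) = a·x + b with a ≠ 0, the decoded prediction diverges from the target: |⟨LN(v(x)), W_dec⟩ − (a·x + b)| → +∞ as x → +∞, where ⟨·,·⟩ is the Euclidean inner product on ℝ^d. -/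
open Filter Real

/-- Coordinate mean `mean(v) = (1/d) ∑ᵢ vᵢ` of a vector in ℝ^d. -/
noncomputable def vecMean {d : ℕ} (v : EuclideanSpace ℝ (Fin d)) : ℝ :=
  (∑ i, v i) / d

/-- Coordinate variance `Var(v) = (1/d) ∑ᵢ (vᵢ − mean(v))²` of a vector in ℝ^d. -/
noncomputable def vecVar {d : ℕ} (v : EuclideanSpace ℝ (Fin d)) : ℝ :=
  (∑ i, (v i - vecMean v) ^ 2) / d

/-- Layer Normalization with gain `ρ` and bias `ε`:
`LN(v) = ((v − mean(v)·𝟙)/√Var(v)) ⊙ ρ + ε` (entrywise). -/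
noncomputable def layerNorm {d : ℕ} (ρ ε : EuclideanSpace ℝ (Fin d))
    (v : EuclideanSpace ℝ (Fin d)) : EuclideanSpace ℝ (Fin d) :=
  WithLp.toLp 2 (fun i => (v i - vecMean v) / Real.sqrt (vecVar v) * ρ i + ε i)

/-!
Layer normalization is invariant under positive rescaling, so `LN(v x) = LN(x⁻¹ • v x)`, and
`x⁻¹ • v x → u`. Since `Var u > 0`, `LN` is continuous at `u`, hence the decoded output converges
to `⟪LN u, W_dec⟫` and stays bounded, while `|a x + b| → ∞`.
-/

open Topology

lemma vecMean_smul {d : ℕ} (c : ℝ) (z : EuclideanSpace ℝ (Fin d)) :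
    vecMean (c • z) = c * vecMean z := by
  simp [vecMean, ← Finset.mul_sum, mul_div_assoc]

lemma vecVar_smul {d : ℕ} (c : ℝ) (z : EuclideanSpace ℝ (Fin d)) :
    vecVar (c • z) = c ^ 2 * vecVar z := by
  have h : ∀ i, ((c • z) i - c * vecMean z) ^ 2 = c ^ 2 * (z i - vecMean z) ^ 2 := by
    intro i
    rw [PiLp.smul_apply, smul_eq_mul]
    ring
  simp only [vecVar, vecMean_smul, h, ← Finset.mul_sum, mul_div_assoc]

lemma layerNorm_smul_of_pos {d : ℕ} (ρ ε z : EuclideanSpace ℝ (Fin d)) {c : ℝ} (hc : 0 < c) :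
    layerNorm ρ ε (c • z) = layerNorm ρ ε z := by
  ext i
  simp only [layerNorm, PiLp.toLp_apply, PiLp.smul_apply, smul_eq_mul, vecMean_smul,
    vecVar_smul]
  rw [Real.sqrt_mul (by positivity), Real.sqrt_sq hc.le, ← mul_sub,
    mul_div_mul_left _ _ hc.ne']

lemma vecVar_nonneg {d : ℕ} (z : EuclideanSpace ℝ (Fin d)) : 0 ≤ vecVar z :=
  div_nonneg (Finset.sum_nonneg fun _ _ => sq_nonneg _) (Nat.cast_nonneg _)

lemma continuous_vecMean {d : ℕ} : Continuous (vecMean : EuclideanSpace ℝ (Fin d) → ℝ) :=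
  (continuous_finsetSum _ fun i _ => (EuclideanSpace.proj i).continuous).div_const _

lemma continuous_vecVar {d : ℕ} : Continuous (vecVar : EuclideanSpace ℝ (Fin d) → ℝ) :=
  (continuous_finsetSum _ fun i _ =>
    ((EuclideanSpace.proj i).continuous.sub continuous_vecMean).pow 2).div_const _

lemma continuousAt_layerNorm {d : ℕ} (ρ ε : EuclideanSpace ℝ (Fin d))
    {u : EuclideanSpace ℝ (Fin d)} (hu : vecVar u ≠ 0) :
    ContinuousAt (layerNorm ρ ε) u := by
  have hsqrt : Real.sqrt (vecVar u) ≠ 0 := (Real.sqrt_ne_zero (vecVar_nonneg u)).2 hu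
  refine (PiLp.continuous_toLp 2 _).continuousAt.comp (continuousAt_pi' fun i => ?_)
  exact ((((EuclideanSpace.proj i).continuous.sub continuous_vecMean).continuousAt.div
    (Real.continuous_sqrt.comp continuous_vecVar).continuousAt hsqrt).mul
      continuousAt_const).add continuousAt_const

lemma tendsto_inv_smul_of_tendsto_sub_affine {E : Type*} [NormedAddCommGroup E]
    [NormedSpace ℝ E] {v : ℝ → E} {u w : E}
    (hv : Tendsto (fun x : ℝ => v x - (x • u + w)) atTop (𝓝 0)) :
    Tendsto (fun x : ℝ => x⁻¹ • v x) atTop (𝓝 u) := by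
  have hlim : Tendsto (fun x : ℝ => x⁻¹ • (v x - (x • u + w)) + (u + x⁻¹ • w)) atTop
      (𝓝 ((0 : ℝ) • (0 : E) + (u + (0 : ℝ) • w))) :=
    (tendsto_inv_atTop_zero.smul hv).add
      (tendsto_const_nhds.add (tendsto_inv_atTop_zero.smul tendsto_const_nhds))
  simp only [zero_smul, zero_add, add_zero] at hlim
  refine hlim.congr' ?_
  filter_upwards [eventually_ne_atTop (0 : ℝ)] with x hx
  simp only [smul_sub, smul_add, smul_smul, inv_mul_cancel₀ hx, one_smul]
  abel

lemma tendsto_layerNorm_of_tendsto_sub_affine {d : ℕ} (ρ ε : EuclideanSpace ℝ (Fin d))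
    {u w : EuclideanSpace ℝ (Fin d)} (hu : vecVar u ≠ 0) {v : ℝ → EuclideanSpace ℝ (Fin d)}
    (hv : Tendsto (fun x : ℝ => v x - (x • u + w)) atTop (𝓝 0)) :
    Tendsto (fun x : ℝ => layerNorm ρ ε (v x)) atTop (𝓝 (layerNorm ρ ε u)) := by
  refine ((continuousAt_layerNorm ρ ε hu).tendsto.comp
    (tendsto_inv_smul_of_tendsto_sub_affine hv)).congr' ?_
  filter_upwards [eventually_gt_atTop (0 : ℝ)] with x hx
  exact layerNorm_smul_of_pos ρ ε (v x) (inv_pos.2 hx)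

lemma tendsto_abs_mul_add_atTop {a : ℝ} (ha : a ≠ 0) (b : ℝ) :
    Tendsto (fun x : ℝ => |a * x + b|) atTop atTop := by
  rcases ha.lt_or_gt with ha | ha
  · exact tendsto_abs_atBot_atTop.comp
      (tendsto_atBot_add_const_right _ b (tendsto_id.const_mul_atTop_of_neg ha))
  · exact tendsto_abs_atTop_atTop.comp
      (tendsto_atTop_add_const_right _ b (tendsto_id.const_mul_atTop ha))

lemma tendsto_abs_sub_atTop_of_tendsto_nhds {α : Type*} {l : Filter α} {f g : α → ℝ} {c : ℝ}
    (hf : Tendsto f l (𝓝 c)) (hg : Tendsto (fun x => |g x|) l atTop) :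
    Tendsto (fun x => |f x - g x|) l atTop := by
  refine tendsto_atTop_mono (fun x => ?_) (hg.atTop_add hf.abs.neg)
  rw [abs_sub_comm]
  linarith [abs_sub_abs_le_abs_sub (g x) (f x)]

theorem stmt_16_general (d : ℕ) (u w : EuclideanSpace ℝ (Fin d))
    (hu : 0 < vecVar u)
    (v : ℝ → EuclideanSpace ℝ (Fin d))
    (hv : Filter.Tendsto (fun x : ℝ => v x - (x • u + w)) Filter.atTop (nhds 0))
    (ρ ε Wdec : EuclideanSpace ℝ (Fin d)) (a b : ℝ) (ha : a ≠ 0) :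
    Filter.Tendsto
      (fun x : ℝ => |(inner ℝ (layerNorm ρ ε (v x)) Wdec : ℝ) - (a * x + b)|)
      Filter.atTop Filter.atTop :=
  tendsto_abs_sub_atTop_of_tendsto_nhds
    ((tendsto_layerNorm_of_tendsto_sub_affine ρ ε hu.ne' hv).inner tendsto_const_nhds)
    (tendsto_abs_mul_add_atTop ha b)

theorem stmt_16 (d : ℕ) (hd : 1 ≤ d) (u w : EuclideanSpace ℝ (Fin d))
    (hu : 0 < vecVar u)
    (v : ℝ → EuclideanSpace ℝ (Fin d))
    (hv : Filter.Tendsto (fun x : ℝ => v x - (x • u + w)) Filter.atTop (nhds 0))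
    (ρ ε Wdec : EuclideanSpace ℝ (Fin d)) (a b : ℝ) (ha : a ≠ 0) :
    Filter.Tendsto
      (fun x : ℝ => |(inner ℝ (layerNorm ρ ε (v x)) Wdec : ℝ) - (a * x + b)|)
      Filter.atTop Filter.atTop :=
  stmt_16_general d u w hu v hv ρ ε Wdec a b ha
end
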